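/- Let X be a random variable on [n] with H(X) ≥ log₂ n − δ, where δ = 1/48². Then there exists a set S ⊆ [n] with |S| ≥ (3/4)n such that for every x ∈ S, Pr[X = x] ≥ 1/(2n). -/

import Mathlib

/-!
`log n - H(p)` is `1/n` times `∑ klFun (n * p i)`, the relative entropy of `p` to the uniform
distribution, and every summand is nonnegative. An atom with `p i < 1/(2n)` contributes at least
`klFun (1/2) ≥ 1/8`, since `klFun` decreases on `[0, 1]`. An entropy deficit of `log 2 / 48²`
therefore leaves room for at most `8 n log 2 / 48² < n/4` such atoms.
-/

open Real Finset InformationTheory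

namespace InformationTheory

lemma antitoneOn_klFun : AntitoneOn klFun (Set.Icc 0 1) := by
  refine antitoneOn_of_deriv_nonpos (convex_Icc 0 1) continuous_klFun.continuousOn ?_ ?_
  · intro x hx
    rw [interior_Icc] at hx
    exact (hasDerivAt_klFun hx.1.ne').differentiableAt.differentiableWithinAt
  · intro x hx
    rw [interior_Icc] at hx
    rw [deriv_klFun]
    exact log_nonpos hx.1.le hx.2.le

lemma one_div_eight_le_klFun_half : 1 / 8 ≤ klFun (1 / 2) := by
  simp only [klFun_apply, one_div, log_inv]
  nlinarith [log_two_lt_d9]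

variable {ι : Type*} [Fintype ι] {p : ι → ℝ}

lemma sum_klFun_card_mul_eq (hp1 : ∑ i, p i = 1) :
    ∑ i, klFun (Fintype.card ι * p i) =
      Fintype.card ι * (log (Fintype.card ι) - ∑ i, negMulLog (p i)) := by
  set n : ℝ := (Fintype.card ι : ℝ)
  have hterm : ∀ i, klFun (n * p i) = p i * (n * log n) - n * negMulLog (p i) + 1 - n * p i := by
    intro i
    have h := negMulLog_mul n (p i)
    simp only [negMulLog] at h ⊢
    rw [klFun_apply]
    linarith
  simp only [hterm, sum_sub_distrib, sum_add_distrib, ← sum_mul, ← mul_sum, hp1, sum_const,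
    card_univ, nsmul_eq_mul]
  ring

lemma card_filter_le_div_card_mul_klFun_le (hp0 : ∀ i, 0 ≤ p i) (hp1 : ∑ i, p i = 1) {c : ℝ}
    (hc0 : 0 ≤ c) (hc1 : c ≤ 1) :
    #{i | p i ≤ c / Fintype.card ι} * klFun c ≤
      Fintype.card ι * (log (Fintype.card ι) - ∑ i, negMulLog (p i)) := by
  set n : ℝ := (Fintype.card ι : ℝ)
  have hn : 0 ≤ n := Nat.cast_nonneg _
  have hsmall : ∀ i ∈ ({i | p i ≤ c / n} : Finset ι), klFun c ≤ klFun (n * p i) := by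
    intro i hi
    have hle : n * p i ≤ c := by
      rw [mul_comm]
      exact mul_le_of_le_div₀ hc0 hn (mem_filter.1 hi).2
    have hpos : 0 ≤ n * p i := mul_nonneg hn (hp0 i)
    exact antitoneOn_klFun ⟨hpos, hle.trans hc1⟩ ⟨hc0, hc1⟩ hle
  calc #{i | p i ≤ c / n} * klFun c
      ≤ ∑ i ∈ {i | p i ≤ c / n}, klFun (n * p i) := by
        simpa [nsmul_eq_mul] using card_nsmul_le_sum _ _ _ hsmall
    _ ≤ ∑ i, klFun (n * p i) :=
        sum_le_sum_of_subset_of_nonneg (subset_univ _)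
          fun i _ _ => klFun_nonneg (mul_nonneg hn (hp0 i))
    _ = n * (log n - ∑ i, negMulLog (p i)) := sum_klFun_card_mul_eq hp1

end InformationTheory

theorem stmt3_general (n : ℕ) (p : Fin n → ℝ)
    (hp0 : ∀ i, 0 ≤ p i) (hp1 : ∑ i, p i = 1)
    (hH : (∑ i, Real.negMulLog (p i)) / Real.log 2 ≥ Real.logb 2 n - 1 / 48 ^ 2) :
    ∃ S : Finset (Fin n), (S.card : ℝ) ≥ 3 / 4 * n ∧ ∀ x ∈ S, p x ≥ 1 / (2 * n) := by
  have hlog2 : 0 < log 2 := log_pos one_lt_two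
  have hdeficit : log n - ∑ i, negMulLog (p i) ≤ log 2 / 48 ^ 2 := by
    rw [ge_iff_le, logb, div_sub' hlog2.ne', div_le_div_iff_of_pos_right hlog2] at hH
    linarith
  have hmarkov := card_filter_le_div_card_mul_klFun_le hp0 hp1 (c := 1 / 2) (by norm_num)
    (by norm_num)
  rw [Fintype.card_fin, div_div] at hmarkov
  have hbad : (#{i | ¬ 1 / (2 * n) ≤ p i} : ℝ) ≤ n / 4 := by
    have hsub : (#{i | ¬ 1 / (2 * n) ≤ p i} : ℝ) ≤ #{i | p i ≤ 1 / (2 * n)} := by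
      exact_mod_cast card_le_card fun i => by simpa using le_of_lt
    nlinarith [one_div_eight_le_klFun_half, log_two_lt_d9, (n.cast_nonneg : (0 : ℝ) ≤ n),
      (#{i | p i ≤ 1 / (2 * (n : ℝ))}).cast_nonneg (α := ℝ)]
  refine ⟨({i | 1 / (2 * n) ≤ p i} : Finset (Fin n)), ?_, fun x hx => (mem_filter.1 hx).2⟩
  have hsplit := card_filter_add_card_filter_not (s := (univ : Finset (Fin n)))
    (fun i => 1 / (2 * (n : ℝ)) ≤ p i)
  rw [card_univ, Fintype.card_fin] at hsplit
  have hsplit' : (#{i | 1 / (2 * n) ≤ p i} : ℝ) + #{i | ¬ 1 / (2 * n) ≤ p i} = n := by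
    exact_mod_cast hsplit
  linarith

/-- If `X` is a random variable on `[n]` with `H(X) ≥ log₂ n - 1/48²`,
then there is a set `S ⊆ [n]` with `|S| ≥ (3/4)n` such that `Pr[X = x] ≥ 1/(2n)` for
every `x ∈ S`. -/
theorem stmt3 (n : ℕ) (hn : 0 < n) (p : Fin n → ℝ)
    (hp0 : ∀ i, 0 ≤ p i) (hp1 : ∑ i, p i = 1)
    (hH : (∑ i, Real.negMulLog (p i)) / Real.log 2 ≥ Real.logb 2 n - 1 / 48 ^ 2) :
    ∃ S : Finset (Fin n), (S.card : ℝ) ≥ 3 / 4 * n ∧ ∀ x ∈ S, p x ≥ 1 / (2 * n) :=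
  stmt3_general n p hp0 hp1 hH
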